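/- A vector x ∈ ℝⁿ is the mean score sequence of a random Coxeter tournament of type Dₙ on the complete signed graph (no half-edges or loops) if and only if |x| is weakly sub-majorized by ρ = (0, 1, 2, …, n-1). -/

import Mathlib

open Finset

/-- `u` is weakly sub-majorized by `v`. -/
def WeakSubMaj {α β : Type*} [Fintype α] [Fintype β] (u : α → ℝ) (v : β → ℝ) : Prop :=
  ∀ S : Finset α, ∃ T : Finset β, T.card = S.card ∧ ∑ i ∈ S, u i ≤ ∑ j ∈ T, v j

/-- `x` is the mean score sequence of a random Coxeter tournament of type `Dₙ`
on the complete signed graph on `n` vertices (no half-edges or loops). -/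
def IsMeanScoreSeqD (n : ℕ) (x : Fin n → ℝ) : Prop :=
  ∃ (pm pp : Fin n → Fin n → ℝ),
    (∀ i j, 0 ≤ pm i j ∧ pm i j ≤ 1) ∧
    (∀ i j, i ≠ j → pm i j = 1 - pm j i) ∧
    (∀ i j, 0 ≤ pp i j ∧ pp i j ≤ 1) ∧
    (∀ i j, pp i j = pp j i) ∧
    (∀ i, x i = ∑ j ∈ univ.erase i, (pm i j - 1/2)
              + ∑ j ∈ univ.erase i, (pp i j - 1/2))

open SignType (sign)

/-! The mean score sequences form a compact convex set `A ⊆ ℝⁿ` (an affine image of the compact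
convex set of tournaments), so `x ∈ A` iff `⟨u, x⟩ ≤ h(u)` for every `u`, where `h` is the support
function of `A`. Grouping the two games between `i` and `j` shows
`h(u) = ∑_{i<j} max(|uᵢ|, |uⱼ|)`: writing `qᵢⱼ = p⁻ᵢⱼ + p⁺ᵢⱼ - 1`, the pair contributes
`((uᵢ + uⱼ)(qᵢⱼ + qⱼᵢ) + (uᵢ - uⱼ)(qᵢⱼ - qⱼᵢ)) / 2` with both brackets in `[-1, 1]`, and the
bound is attained by deciding the `-` game by the sign of `uᵢ - uⱼ` and the `+` game by the sign
of `uᵢ + uⱼ`. Peeling off the smallest value of `|u|` on its support writes `h(|u|)` as a positive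
combination of values `h(1_S)` over a chain of sets (a discrete Choquet integral), so the
inequalities reduce to `u = ±1_S`, i.e. to `∑_{i∈S} |xᵢ| ≤ h(1_S)`. Finally
`h(1_S) = (n-1) + (n-2) + ⋯ + (n-|S|)` is the largest sum of `|S|` entries of `ρ`. -/

lemma two_mul_max_abs_abs (a b : ℝ) : 2 * max |a| |b| = |a + b| + |a - b| := by
  rcases abs_cases (a + b) with ⟨_, _⟩ | ⟨_, _⟩ <;>
    rcases abs_cases (a - b) with ⟨_, _⟩ | ⟨_, _⟩ <;>
    rcases abs_cases a with ⟨_, _⟩ | ⟨_, _⟩ <;> rcases abs_cases b with ⟨_, _⟩ | ⟨_, _⟩ <;>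
    rcases max_cases |a| |b| with ⟨_, _⟩ | ⟨_, _⟩ <;> linarith

lemma mul_add_mul_le_max_abs_abs {a b c d : ℝ} (h₁ : |c + d| ≤ 1) (h₂ : |c - d| ≤ 1) :
    a * c + b * d ≤ max |a| |b| := by
  have hsum : (a + b) * (c + d) ≤ |a + b| :=
    (le_abs_self _).trans ((abs_mul _ _).trans_le (mul_le_of_le_one_right (abs_nonneg _) h₁))
  have hdiff : (a - b) * (c - d) ≤ |a - b| :=
    (le_abs_self _).trans ((abs_mul _ _).trans_le (mul_le_of_le_one_right (abs_nonneg _) h₂))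
  linarith [two_mul_max_abs_abs a b]

lemma mul_add_mul_sign_eq_max_abs_abs (a b : ℝ) :
    a * (((sign (a - b) : ℝ) + sign (a + b)) / 2) + b * (((sign (b - a) : ℝ) + sign (b + a)) / 2)
      = max |a| |b| := by
  have h := two_mul_max_abs_abs a b
  rw [← self_mul_sign (a + b), ← self_mul_sign (a - b)] at h
  rw [show b - a = -(a - b) by ring, Left.sign_neg, add_comm b a]
  push_cast
  linarith

lemma one_add_sign_div_two_mem_Icc (x : ℝ) : (1 + (sign x : ℝ)) / 2 ∈ Set.Icc (0 : ℝ) 1 := by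
  rcases lt_trichotomy x 0 with h | rfl | h <;> norm_num [sign_pos, sign_neg, *]

lemma mem_of_forall_exists_sum_mul_le {ι : Type*} [Fintype ι] {A : Set (ι → ℝ)}
    (hconv : Convex ℝ A) (hclosed : IsClosed A) {x : ι → ℝ}
    (hx : ∀ u : ι → ℝ, ∃ a ∈ A, ∑ i, u i * x i ≤ ∑ i, u i * a i) : x ∈ A := by
  classical
  by_contra hxA
  obtain ⟨f, c, hfA, hfx⟩ := geometric_hahn_banach_closed_point hconv hclosed hxA
  have hf : ∀ y, f y = ∑ i, f (fun j => if i = j then 1 else 0) * y i := fun y => by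
    simpa [mul_comm] using (f : (ι → ℝ) →ₗ[ℝ] ℝ).pi_apply_eq_sum_univ y
  obtain ⟨a, ha, hle⟩ := hx _
  linarith [hfA a ha, hf a, hf x]

section

variable {ι : Type*}

structure IsCoxeterTournamentD (pm pp : ι → ι → ℝ) : Prop where
  pm_mem_Icc : ∀ i j, pm i j ∈ Set.Icc (0 : ℝ) 1
  pm_antisymm : ∀ i j, i ≠ j → pm i j = 1 - pm j i
  pp_mem_Icc : ∀ i j, pp i j ∈ Set.Icc (0 : ℝ) 1
  pp_symm : ∀ i j, pp i j = pp j i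

lemma isCompact_setOf_isCoxeterTournamentD :
    IsCompact {p : (ι → ι → ℝ) × (ι → ι → ℝ) | IsCoxeterTournamentD p.1 p.2} := by
  have hK : {p : (ι → ι → ℝ) × (ι → ι → ℝ) | IsCoxeterTournamentD p.1 p.2}
      = Set.Icc 0 1 ×ˢ Set.Icc 0 1 ∩
        ({p : (ι → ι → ℝ) × (ι → ι → ℝ) | ∀ i j, i ≠ j → p.1 i j = 1 - p.1 j i} ∩
          {p : (ι → ι → ℝ) × (ι → ι → ℝ) | ∀ i j, p.2 i j = p.2 j i}) := by
    ext ⟨pm, pp⟩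
    simp only [Set.mem_ofPred_eq, Set.mem_inter_iff, Set.mem_prod, Set.mem_Icc, Pi.le_def,
      Pi.zero_apply, Pi.one_apply]
    exact ⟨fun h => ⟨⟨⟨fun i j => (h.pm_mem_Icc i j).1, fun i j => (h.pm_mem_Icc i j).2⟩,
        ⟨fun i j => (h.pp_mem_Icc i j).1, fun i j => (h.pp_mem_Icc i j).2⟩⟩,
        h.pm_antisymm, h.pp_symm⟩,
      fun ⟨⟨⟨hpm0, hpm1⟩, ⟨hpp0, hpp1⟩⟩, hanti, hsymm⟩ =>
        ⟨fun i j => ⟨hpm0 i j, hpm1 i j⟩, hanti, fun i j => ⟨hpp0 i j, hpp1 i j⟩, hsymm⟩⟩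
  rw [hK]
  refine (isCompact_Icc.prod isCompact_Icc).inter_right (IsClosed.inter ?_ ?_)
  · simp only [Set.ofPred_forall]
    exact isClosed_iInter fun i => isClosed_iInter fun j => isClosed_iInter fun _ =>
      isClosed_eq (by fun_prop) (by fun_prop)
  · simp only [Set.ofPred_forall]
    exact isClosed_iInter fun i => isClosed_iInter fun j => isClosed_eq (by fun_prop) (by fun_prop)

variable [Fintype ι] [DecidableEq ι]

def meanScore (pm pp : ι → ι → ℝ) (i : ι) : ℝ := ∑ j ∈ univ.erase i, (pm i j + pp i j - 1)

variable (ι) in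
def meanScores : Set (ι → ℝ) :=
  {x | ∃ pm pp, IsCoxeterTournamentD pm pp ∧ meanScore pm pp = x}

noncomputable def pairMaxSum (u : ι → ℝ) : ℝ := (∑ i, ∑ j ∈ univ.erase i, max |u i| |u j|) / 2

lemma two_mul_sum_mul_meanScore (pm pp : ι → ι → ℝ) (u : ι → ℝ) :
    2 * ∑ i, u i * meanScore pm pp i
      = ∑ i, ∑ j ∈ univ.erase i,
          (u i * (pm i j + pp i j - 1) + u j * (pm j i + pp j i - 1)) := by
  have hswap : ∑ i, ∑ j ∈ univ.erase i, u i * (pm i j + pp i j - 1)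
      = ∑ i, ∑ j ∈ univ.erase i, u j * (pm j i + pp j i - 1) :=
    sum_comm' fun i j => by simp [ne_comm]
  have hexpand : ∑ i, u i * meanScore pm pp i
      = ∑ i, ∑ j ∈ univ.erase i, u i * (pm i j + pp i j - 1) := by
    simp only [meanScore, mul_sum]
  rw [hexpand, two_mul]
  nth_rewrite 2 [hswap]
  simp only [← sum_add_distrib]

lemma IsCoxeterTournamentD.sum_mul_meanScore_le {pm pp : ι → ι → ℝ}
    (h : IsCoxeterTournamentD pm pp) (u : ι → ℝ) :
    ∑ i, u i * meanScore pm pp i ≤ pairMaxSum u := by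
  rw [pairMaxSum, le_div_iff₀ two_pos, mul_comm, two_mul_sum_mul_meanScore]
  refine sum_le_sum fun i _ => sum_le_sum fun j hj => mul_add_mul_le_max_abs_abs ?_ ?_
  · have := h.pp_mem_Icc i j
    rw [abs_le, h.pm_antisymm j i (ne_of_mem_erase hj), h.pp_symm j i]
    constructor <;> linarith [this.1, this.2]
  · have := h.pm_mem_Icc i j
    rw [abs_le, h.pm_antisymm j i (ne_of_mem_erase hj), h.pp_symm j i]
    constructor <;> linarith [this.1, this.2]

lemma exists_isCoxeterTournamentD_sum_mul_meanScore_eq (u : ι → ℝ) :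
    ∃ pm pp, IsCoxeterTournamentD pm pp ∧ ∑ i, u i * meanScore pm pp i = pairMaxSum u := by
  refine ⟨fun i j => (1 + sign (u i - u j)) / 2, fun i j => (1 + sign (u i + u j)) / 2,
    ⟨fun i j => one_add_sign_div_two_mem_Icc _, fun i j _ => ?_,
      fun i j => one_add_sign_div_two_mem_Icc _, fun i j => by rw [add_comm (u i)]⟩, ?_⟩
  · rw [show u j - u i = -(u i - u j) by ring, Left.sign_neg]
    push_cast
    ring
  · rw [pairMaxSum, eq_div_iff two_ne_zero, mul_comm, two_mul_sum_mul_meanScore]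
    refine sum_congr rfl fun i _ => sum_congr rfl fun j _ => ?_
    rw [← mul_add_mul_sign_eq_max_abs_abs]
    ring

lemma convex_meanScores : Convex ℝ (meanScores ι) := by
  rintro _ ⟨pm, pp, h, rfl⟩ _ ⟨pm', pp', h', rfl⟩ s t hs ht hst
  refine ⟨s • pm + t • pm', s • pp + t • pp',
    ⟨fun i j => convex_Icc (0 : ℝ) 1 (h.pm_mem_Icc i j) (h'.pm_mem_Icc i j) hs ht hst,
      fun i j hij => ?_,
      fun i j => convex_Icc (0 : ℝ) 1 (h.pp_mem_Icc i j) (h'.pp_mem_Icc i j) hs ht hst,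
      fun i j => ?_⟩, ?_⟩
  · simp only [Pi.add_apply, Pi.smul_apply, smul_eq_mul, h.pm_antisymm i j hij,
      h'.pm_antisymm i j hij]
    linear_combination hst
  · simp only [Pi.add_apply, Pi.smul_apply, smul_eq_mul, h.pp_symm i j, h'.pp_symm i j]
  · ext i
    simp only [meanScore, Pi.add_apply, Pi.smul_apply, smul_eq_mul, mul_sum, ← sum_add_distrib]
    exact sum_congr rfl fun j _ => by linear_combination hst

lemma isClosed_meanScores : IsClosed (meanScores ι) := by
  have himage : meanScores ι = (fun p : (ι → ι → ℝ) × (ι → ι → ℝ) => meanScore p.1 p.2) ''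
      {p | IsCoxeterTournamentD p.1 p.2} := by
    ext x
    simp [meanScores]
  rw [himage]
  exact (isCompact_setOf_isCoxeterTournamentD.image (by unfold meanScore; fun_prop)).isClosed

lemma mem_meanScores_iff {x : ι → ℝ} :
    x ∈ meanScores ι ↔ ∀ u : ι → ℝ, ∑ i, u i * x i ≤ pairMaxSum u := by
  refine ⟨?_, fun hx => mem_of_forall_exists_sum_mul_le convex_meanScores isClosed_meanScores
    fun u => ?_⟩
  · rintro ⟨pm, pp, h, rfl⟩
    exact h.sum_mul_meanScore_le
  · obtain ⟨pm, pp, h, heq⟩ := exists_isCoxeterTournamentD_sum_mul_meanScore_eq u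
    exact ⟨_, ⟨pm, pp, h, rfl⟩, heq ▸ hx u⟩

lemma pairMaxSum_abs (u : ι → ℝ) : pairMaxSum (fun i => |u i|) = pairMaxSum u := by
  simp only [pairMaxSum, abs_abs]

lemma pairMaxSum_indicator (S : Finset ι) :
    pairMaxSum (fun i => if i ∈ S then 1 else 0)
      = #S * (2 * Fintype.card ι - #S - 1) / 2 := by
  have hrow : ∀ i, ∑ j ∈ univ.erase i,
      max |(if i ∈ S then 1 else 0 : ℝ)| |(if j ∈ S then 1 else 0 : ℝ)|
        = #S + if i ∈ S then (Fintype.card ι - 1 - #S : ℝ) else 0 := fun i => by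
    rw [sum_erase_eq_sub (mem_univ i)]
    by_cases hi : i ∈ S <;> simp [hi, apply_ite]
  rw [pairMaxSum, sum_congr rfl fun i _ => hrow i, sum_add_distrib, sum_ite_mem, univ_inter]
  simp only [sum_const, card_univ, nsmul_eq_mul]
  ring

lemma pairMaxSum_add_indicator {S : Finset ι} {m : ℝ} (hm : 0 ≤ m) {w : ι → ℝ}
    (hw : ∀ i, 0 ≤ w i) (hwS : ∀ i ∉ S, w i = 0) :
    pairMaxSum (fun i => (if i ∈ S then m else 0) + w i)
      = m * pairMaxSum (fun i => if i ∈ S then 1 else 0) + pairMaxSum w := by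
  simp only [pairMaxSum, mul_div_assoc', ← add_div, mul_sum, ← sum_add_distrib]
  congr 1
  refine sum_congr rfl fun i _ => sum_congr rfl fun j _ => ?_
  have hwi := hw i
  have hwj := hw j
  by_cases hi : i ∈ S <;> by_cases hj : j ∈ S <;>
    simp [hi, hj, hwS, abs_of_nonneg, hm, hwi, hwj, add_nonneg, max_add_add_left]

lemma sum_mul_le_pairMaxSum {z : ι → ℝ}
    (hz : ∀ S : Finset ι, ∑ i ∈ S, z i ≤ pairMaxSum (fun i => if i ∈ S then 1 else 0))
    {w : ι → ℝ} (hw : ∀ i, 0 ≤ w i) : ∑ i, w i * z i ≤ pairMaxSum w := by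
  suffices key : ∀ S : Finset ι, ∀ w : ι → ℝ, (∀ i, 0 ≤ w i) → (∀ i ∉ S, w i = 0) →
      ∑ i, w i * z i ≤ pairMaxSum w from key univ w hw (by simp)
  intro S
  induction S using Finset.strongInduction with
  | H S ih =>
  intro w hw hwS
  rcases S.eq_empty_or_nonempty with rfl | hS
  · have hw0 : w = 0 := funext fun i => hwS i (notMem_empty i)
    simp [hw0, pairMaxSum]
  obtain ⟨i₀, hi₀, hmin⟩ := S.exists_min_image w hS
  set w' : ι → ℝ := fun i => w i - if i ∈ S then w i₀ else 0 with hw'_def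
  have hw' : ∀ i, 0 ≤ w' i := fun i => by
    by_cases hi : i ∈ S <;> simp [hw'_def, hi, hmin, hw]
  have hw'S : ∀ i ∉ S.erase i₀, w' i = 0 := fun i hi => by
    by_cases hiS : i ∈ S
    · obtain rfl : i = i₀ := by simpa [hiS] using hi
      simp [hw'_def, hiS]
    · simp [hw'_def, hiS, hwS i hiS]
  have hsplit : w = fun i => (if i ∈ S then w i₀ else 0) + w' i := by
    ext i; simp [hw'_def]
  calc ∑ i, w i * z i = w i₀ * ∑ i ∈ S, z i + ∑ i, w' i * z i := by
        simp [hw'_def, sub_mul, mul_sum, ite_mul, sum_ite_mem]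
    _ ≤ w i₀ * pairMaxSum (fun i => if i ∈ S then 1 else 0) + pairMaxSum w' :=
        add_le_add (mul_le_mul_of_nonneg_left (hz S) (hw i₀))
          (ih _ (erase_ssubset hi₀) w' hw' hw'S)
    _ = pairMaxSum w := by
        rw [← pairMaxSum_add_indicator (hw i₀) hw' fun i hi => ?_, ← hsplit]
        simp [hw'_def, hi, hwS i hi]

lemma forall_sum_mul_le_pairMaxSum_iff {x : ι → ℝ} :
    (∀ u : ι → ℝ, ∑ i, u i * x i ≤ pairMaxSum u) ↔
      ∀ S : Finset ι, ∑ i ∈ S, |x i| ≤ pairMaxSum (fun i => if i ∈ S then 1 else 0) := by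
  refine ⟨fun h S => ?_, fun h u => ?_⟩
  · set u : ι → ℝ := fun i => if i ∈ S then (if 0 ≤ x i then 1 else -1) else 0 with hu
    calc ∑ i ∈ S, |x i| = ∑ i, u i * x i := by
          rw [← sum_ite_mem_eq]
          refine sum_congr rfl fun i _ => ?_
          by_cases hi : i ∈ S <;> by_cases hx : 0 ≤ x i <;>
            simp [hu, hi, hx, abs_of_nonneg, abs_of_neg, not_le.mp]
      _ ≤ pairMaxSum u := h u
      _ = pairMaxSum (fun i => if i ∈ S then 1 else 0) := by
          rw [← pairMaxSum_abs u]
          congr 1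
          ext i
          by_cases hi : i ∈ S <;> by_cases hx : 0 ≤ x i <;> simp [hu, hi, hx]
  · calc ∑ i, u i * x i ≤ ∑ i, |u i| * |x i| :=
          sum_le_sum fun i _ => (le_abs_self _).trans (abs_mul _ _).le
      _ ≤ pairMaxSum (fun i => |u i|) := sum_mul_le_pairMaxSum h fun i => abs_nonneg _
      _ = pairMaxSum u := pairMaxSum_abs u

end

lemma card_mul_card_sub_one_div_two_le_sum_val {n : ℕ} (T : Finset (Fin n)) :
    (#T : ℝ) * (#T - 1) / 2 ≤ ∑ j ∈ T, (j : ℝ) := by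
  induction T using Finset.induction_on_max with
  | empty => simp
  | insert a s hlt ih =>
    have hcard : #s ≤ (a : ℕ) := by
      simpa using card_le_card fun x hx => mem_Iio.2 (hlt x hx)
    have hcard' : (#s : ℝ) ≤ a := by exact_mod_cast hcard
    rw [card_insert_of_notMem fun ha => lt_irrefl a (hlt a ha), sum_insert
      fun ha => lt_irrefl a (hlt a ha)]
    push_cast
    linarith

lemma sum_val_le {n : ℕ} (T : Finset (Fin n)) :
    ∑ j ∈ T, (j : ℝ) ≤ #T * (2 * n - #T - 1) / 2 := by
  have hrev : ∑ j ∈ T, (j : ℝ) + ∑ j ∈ T.map Fin.revPerm.toEmbedding, (j : ℝ)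
      = #T * (n - 1) := by
    rw [sum_map, ← sum_add_distrib, ← nsmul_eq_mul, ← sum_const]
    refine sum_congr rfl fun j _ => ?_
    have hj := j.isLt
    simp only [Equiv.coe_toEmbedding, Fin.revPerm_apply, Fin.val_rev]
    rw [Nat.cast_sub hj, Nat.cast_succ]
    ring
  have := card_mul_card_sub_one_div_two_le_sum_val (T.map Fin.revPerm.toEmbedding)
  rw [card_map] at this
  linarith

lemma exists_card_eq_sum_val_eq {n k : ℕ} (hk : k ≤ n) :
    ∃ T : Finset (Fin n), #T = k ∧ ∑ j ∈ T, (j : ℝ) = k * (2 * n - k - 1) / 2 := by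
  let top : Fin k ↪ Fin n :=
    ⟨fun j => ⟨n - k + j, by omega⟩, fun a b h => Fin.ext (by simpa using h)⟩
  refine ⟨univ.map top, by simp, ?_⟩
  have hgauss : ∀ m : ℕ, ∑ j ∈ range m, (j : ℝ) = m * (m - 1) / 2 := fun m => by
    induction m with
    | zero => simp
    | succ m ih => rw [sum_range_succ, ih]; push_cast; ring
  rw [sum_map]
  change ∑ j : Fin k, ((n - k + j : ℕ) : ℝ) = _
  rw [Fin.sum_univ_eq_sum_range (fun j => ((n - k + j : ℕ) : ℝ)) k]
  simp only [Nat.cast_add, sum_add_distrib, sum_const, card_range, nsmul_eq_mul, hgauss,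
    Nat.cast_sub hk]
  ring

lemma weakSubMaj_val_iff {n : ℕ} (z : Fin n → ℝ) :
    WeakSubMaj z (fun j : Fin n => (j : ℝ)) ↔
      ∀ S : Finset (Fin n), ∑ i ∈ S, z i ≤ #S * (2 * n - #S - 1) / 2 := by
  refine ⟨fun h S => ?_, fun h S => ?_⟩
  · obtain ⟨T, hT, hle⟩ := h S
    exact hle.trans (hT ▸ sum_val_le T)
  · obtain ⟨T, hT, heq⟩ := exists_card_eq_sum_val_eq (by simpa using card_le_univ S)
    exact ⟨T, hT, heq ▸ h S⟩

lemma isMeanScoreSeqD_iff_mem_meanScores {n : ℕ} {x : Fin n → ℝ} :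
    IsMeanScoreSeqD n x ↔ x ∈ meanScores (Fin n) := by
  have hscore : ∀ (pm pp : Fin n → Fin n → ℝ) (i : Fin n),
      ∑ j ∈ univ.erase i, (pm i j - 1 / 2) + ∑ j ∈ univ.erase i, (pp i j - 1 / 2)
        = meanScore pm pp i := fun pm pp i => by
    rw [meanScore, ← sum_add_distrib]
    exact sum_congr rfl fun j _ => by ring
  simp only [IsMeanScoreSeqD, hscore]
  constructor
  · rintro ⟨pm, pp, hpm, hanti, hpp, hsymm, hx⟩
    exact ⟨pm, pp, ⟨hpm, hanti, hpp, hsymm⟩, funext fun i => (hx i).symm⟩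
  · rintro ⟨pm, pp, ⟨hpm, hanti, hpp, hsymm⟩, rfl⟩
    exact ⟨pm, pp, hpm, hanti, hpp, hsymm, fun i => rfl⟩

theorem meanScoreSeqD_iff_weakSubMaj (n : ℕ) (x : Fin n → ℝ) :
    IsMeanScoreSeqD n x ↔
      WeakSubMaj (fun i => |x i|) (fun i : Fin n => (i : ℝ)) := by
  rw [isMeanScoreSeqD_iff_mem_meanScores, mem_meanScores_iff, forall_sum_mul_le_pairMaxSum_iff,
    weakSubMaj_val_iff]
  simp only [pairMaxSum_indicator, Fintype.card_fin]
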